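/- Let g ∈ SL(2,ℝ) and let φ be a function on the unit circle S = {s ∈ ℝ² : ‖s‖ = 1} integrable with respect to the arc-length measure ds. Then ∫_S φ(g·s / ‖g·s‖) · ‖g·s‖^{-2} ds = ∫_S φ(s) ds, where g·s denotes the linear action of the matrix g on s ∈ ℝ². -/

import Mathlib

open MeasureTheory Real
open scoped Real

/-- The Euclidean norm on `ℝ²`. -/
noncomputable def vnorm (v : Fin 2 → ℝ) : ℝ := Real.sqrt (v 0 ^ 2 + v 1 ^ 2)

/-- The arc-length parametrization `θ ↦ (cos θ, sin θ)` of the unit circle `S ⊂ ℝ²`. -/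
noncomputable def circ (θ : ℝ) : Fin 2 → ℝ := ![Real.cos θ, Real.sin θ]

namespace CAI

noncomputable def zz (g : Matrix.SpecialLinearGroup (Fin 2) ℝ) (θ : ℝ) : ℂ :=
  ((g.1 0 0 * Real.cos θ + g.1 0 1 * Real.sin θ : ℝ) : ℂ) +
    ((g.1 1 0 * Real.cos θ + g.1 1 1 * Real.sin θ : ℝ) : ℂ) * Complex.I

noncomputable def zz' (g : Matrix.SpecialLinearGroup (Fin 2) ℝ) (θ : ℝ) : ℂ :=
  ((-(g.1 0 0) * Real.sin θ + g.1 0 1 * Real.cos θ : ℝ) : ℂ) +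
    ((-(g.1 1 0) * Real.sin θ + g.1 1 1 * Real.cos θ : ℝ) : ℂ) * Complex.I

variable (g : Matrix.SpecialLinearGroup (Fin 2) ℝ)

lemma det1 : g.1 0 0 * g.1 1 1 - g.1 0 1 * g.1 1 0 = 1 := by
  have h := g.2
  rw [Matrix.det_fin_two] at h
  linarith

lemma zz_re (θ : ℝ) : (zz g θ).re = g.1 0 0 * Real.cos θ + g.1 0 1 * Real.sin θ := by
  simp only [zz, Complex.add_re, Complex.ofReal_re, Complex.mul_re, Complex.ofReal_im,
    Complex.I_re, Complex.I_im]
  ring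

lemma zz_im (θ : ℝ) : (zz g θ).im = g.1 1 0 * Real.cos θ + g.1 1 1 * Real.sin θ := by
  simp only [zz, Complex.add_im, Complex.ofReal_im, Complex.mul_im, Complex.ofReal_re,
    Complex.I_re, Complex.I_im]
  ring

lemma mulVec_circ_zero (θ : ℝ) : g.1.mulVec (circ θ) 0 = (zz g θ).re := by
  simp [Matrix.mulVec, circ, Fin.sum_univ_two, Matrix.vecHead, Matrix.vecTail, zz_re]

lemma mulVec_circ_one (θ : ℝ) : g.1.mulVec (circ θ) 1 = (zz g θ).im := by
  simp [Matrix.mulVec, circ, Fin.sum_univ_two, Matrix.vecHead, Matrix.vecTail, zz_im]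

lemma zz_ne_zero (θ : ℝ) : zz g θ ≠ 0 := by
  intro h
  have h1 : g.1 0 0 * Real.cos θ + g.1 0 1 * Real.sin θ = 0 := by
    have := congrArg Complex.re h; simpa [zz_re] using this
  have h2 : g.1 1 0 * Real.cos θ + g.1 1 1 * Real.sin θ = 0 := by
    have := congrArg Complex.im h; simpa [zz_im] using this
  have hd := det1 g
  have hp := Real.sin_sq_add_cos_sq θ
  have hc : Real.cos θ = 0 := by
    linear_combination g.1 1 1 * h1 - g.1 0 1 * h2 - Real.cos θ * hd
  have hs : Real.sin θ = 0 := by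
    linear_combination g.1 0 0 * h2 - g.1 1 0 * h1 - Real.sin θ * hd
  rw [hc, hs] at hp
  norm_num at hp

lemma continuous_zz : Continuous (zz g) := by
  unfold zz; fun_prop

lemma continuous_zz' : Continuous (zz' g) := by
  unfold zz'; fun_prop

lemma hasDerivAt_zz (θ : ℝ) : HasDerivAt (zz g) (zz' g θ) θ := by
  have h1 : HasDerivAt (fun t : ℝ => g.1 0 0 * Real.cos t + g.1 0 1 * Real.sin t)
      (-(g.1 0 0) * Real.sin θ + g.1 0 1 * Real.cos θ) θ := by
    have := ((Real.hasDerivAt_cos θ).const_mul (g.1 0 0)).add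
      ((Real.hasDerivAt_sin θ).const_mul (g.1 0 1))
    exact this.congr_deriv (by ring)
  have h2 : HasDerivAt (fun t : ℝ => g.1 1 0 * Real.cos t + g.1 1 1 * Real.sin t)
      (-(g.1 1 0) * Real.sin θ + g.1 1 1 * Real.cos θ) θ := by
    have := ((Real.hasDerivAt_cos θ).const_mul (g.1 1 0)).add
      ((Real.hasDerivAt_sin θ).const_mul (g.1 1 1))
    exact this.congr_deriv (by ring)
  have := (h1.ofReal_comp).add ((h2.ofReal_comp).mul_const Complex.I)
  exact this


noncomputable def LL (g : Matrix.SpecialLinearGroup (Fin 2) ℝ) (θ : ℝ) : ℂ :=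
  ∫ t in (0:ℝ)..θ, zz' g t / zz g t

lemma continuous_quot : Continuous fun t => zz' g t / zz g t :=
  (continuous_zz' g).div (continuous_zz g) (zz_ne_zero g)

lemma hasDerivAt_LL (θ : ℝ) : HasDerivAt (LL g) (zz' g θ / zz g θ) θ := by
  refine intervalIntegral.integral_hasDerivAt_right
    ((continuous_quot g).intervalIntegrable _ _)
    ((continuous_quot g).stronglyMeasurable.stronglyMeasurableAtFilter)
    (continuous_quot g).continuousAt

lemma key (θ : ℝ) : zz g θ = zz g 0 * Complex.exp (LL g θ) := by
  have hF : ∀ t : ℝ, HasDerivAt (fun u => zz g u * Complex.exp (-LL g u)) 0 t := by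
    intro t
    have h1 := (hasDerivAt_zz g t).mul (((hasDerivAt_LL g t).neg).cexp)
    refine h1.congr_deriv ?_
    have hz := zz_ne_zero g t
    have h : zz g t * (zz' g t / zz g t) = zz' g t := by field_simp
    linear_combination -(Complex.exp ((-LL g) t)) * h
  have hconst := is_const_of_deriv_eq_zero
    (fun t => (hF t).differentiableAt) (fun t => (hF t).deriv) θ 0
  have hL0 : LL g 0 = 0 := intervalIntegral.integral_same
  rw [hL0] at hconst
  simp only [neg_zero, Complex.exp_zero, mul_one] at hconst
  have hexp := Complex.exp_ne_zero (LL g θ)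
  field_simp [Complex.exp_neg] at hconst
  rw [← hconst, mul_assoc, ← Complex.exp_add, neg_add_cancel, Complex.exp_zero, mul_one]

noncomputable def hh (g : Matrix.SpecialLinearGroup (Fin 2) ℝ) (θ : ℝ) : ℝ :=
  (zz g 0).arg + (LL g θ).im

noncomputable def rr (g : Matrix.SpecialLinearGroup (Fin 2) ℝ) (θ : ℝ) : ℝ :=
  ‖zz g θ‖

lemma rr_pos (θ : ℝ) : 0 < rr g θ := by
  simpa [rr] using (norm_pos_iff.mpr (zz_ne_zero g θ))

lemma polar (θ : ℝ) : zz g θ = (rr g θ : ℂ) * Complex.exp ((hh g θ : ℝ) * Complex.I) := by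
  have hk := key g θ
  have hr : rr g θ = rr g 0 * Real.exp ((LL g θ).re) := by
    rw [rr, rr, hk, norm_mul, Complex.norm_exp]
  have hz0 : (zz g 0) = (rr g 0 : ℂ) * Complex.exp ((zz g 0).arg * Complex.I) :=
    (Complex.norm_mul_exp_arg_mul_I (zz g 0)).symm
  have hL : Complex.exp (LL g θ) =
      Complex.exp ((LL g θ).re : ℂ) * Complex.exp (((LL g θ).im : ℝ) * Complex.I) := by
    rw [← Complex.exp_add, Complex.re_add_im]
  have hsplit : Complex.exp (((zz g 0).arg + (LL g θ).im : ℝ) * Complex.I) =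
      Complex.exp ((zz g 0).arg * Complex.I) * Complex.exp (((LL g θ).im : ℝ) * Complex.I) := by
    rw [← Complex.exp_add]
    push_cast
    ring_nf
  rw [hk, hz0, hh, hr, hL, hsplit]
  push_cast [Complex.ofReal_exp]
  ring

lemma a_eq (θ : ℝ) : (zz g θ).re = rr g θ * Real.cos (hh g θ) := by
  conv_lhs => rw [polar g θ]
  simp [Complex.exp_ofReal_mul_I_re]

lemma b_eq (θ : ℝ) : (zz g θ).im = rr g θ * Real.sin (hh g θ) := by
  conv_lhs => rw [polar g θ]
  simp [Complex.exp_ofReal_mul_I_im]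

noncomputable def rho (g : Matrix.SpecialLinearGroup (Fin 2) ℝ) (θ : ℝ) : ℝ :=
  (rr g θ ^ 2)⁻¹

lemma rho_pos (θ : ℝ) : 0 < rho g θ := by
  have := rr_pos g θ
  unfold rho
  positivity

lemma quot_im (θ : ℝ) : (zz' g θ / zz g θ).im = rho g θ := by
  have hnum : (zz' g θ).im * (zz g θ).re - (zz' g θ).re * (zz g θ).im = 1 := by
    simp only [zz_re, zz_im]
    simp only [zz', Complex.add_re, Complex.ofReal_re, Complex.mul_re, Complex.ofReal_im,
      Complex.I_re, Complex.I_im, Complex.add_im, Complex.mul_im]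
    have hd := det1 g
    have hp := Real.sin_sq_add_cos_sq θ
    linear_combination (Real.sin θ ^ 2 + Real.cos θ ^ 2) * hd + hp
  have hns : Complex.normSq (zz g θ) = rr g θ ^ 2 := by
    rw [rr, Complex.sq_norm]
  rw [Complex.div_im, hns]
  unfold rho
  have h2 : (0:ℝ) < rr g θ ^ 2 := by have := rr_pos g θ; positivity
  field_simp
  rw [hnum]
lemma hh_def (θ : ℝ) : hh g θ = (zz g 0).arg + (LL g θ).im := rfl

lemma rr_def (θ : ℝ) : rr g θ = ‖zz g θ‖ := rfl

lemma rho_def (θ : ℝ) : rho g θ = (rr g θ ^ 2)⁻¹ := rfl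

lemma hasDerivAt_hh (θ : ℝ) : HasDerivAt (hh g) (rho g θ) θ := by
  have h1 : HasDerivAt (fun t => (LL g t).im) ((zz' g θ / zz g θ).im) θ :=
    (Complex.imCLM.hasFDerivAt.comp_hasDerivAt θ (hasDerivAt_LL g θ))
  have h2 := h1.const_add ((zz g 0).arg)
  rw [quot_im] at h2
  have : (fun t => (zz g 0).arg + (LL g t).im) = hh g := by
    funext t; rw [hh_def]
  rwa [this] at h2

lemma strictMono_hh : StrictMono (hh g) := by
  apply strictMono_of_deriv_pos
  intro x
  rw [(hasDerivAt_hh g x).deriv]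
  exact rho_pos g x

lemma continuous_hh : Continuous (hh g) := by
  have hdiff : Differentiable ℝ (hh g) := fun x => (hasDerivAt_hh g x).differentiableAt
  exact hdiff.continuous

lemma zz_periodic : zz g (2 * π) = zz g 0 := by
  apply Complex.ext
  · rw [zz_re, zz_re]; simp
  · rw [zz_im, zz_im]; simp

lemma hh_top : hh g (2 * π) = hh g 0 + 2 * π := by
  have hd := det1 g
  have hzp := zz_periodic g
  have hrp : rr g (2 * π) = rr g 0 := by rw [rr_def, rr_def, hzp]
  have hexp : Complex.exp ((hh g (2 * π) : ℝ) * Complex.I)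
      = Complex.exp ((hh g 0 : ℝ) * Complex.I) := by
    have h0 := (polar g (2 * π)).symm.trans (hzp.trans (polar g 0))
    rw [hrp] at h0
    have hr0 : ((rr g 0 : ℝ) : ℂ) ≠ 0 := by exact_mod_cast (rr_pos g 0).ne'
    exact mul_left_cancel₀ hr0 h0
  obtain ⟨n, hn⟩ := Complex.exp_eq_exp_iff_exists_int.mp hexp
  have hre : hh g (2 * π) = hh g 0 + n * (2 * π) := by
    have him := congrArg Complex.im hn
    simpa using him
  have hlt : hh g 0 < hh g (2 * π) := strictMono_hh g Real.two_pi_pos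
  have hpos : 0 < n := by
    by_contra hcon
    push_neg at hcon
    have : (n : ℝ) * (2 * π) ≤ 0 := by
      apply mul_nonpos_of_nonpos_of_nonneg
      · exact_mod_cast hcon
      · positivity
    linarith
  have hn1 : n = 1 := by
    by_contra hne
    have hn2 : 2 ≤ n := by omega
    have hn2' : (2 : ℝ) ≤ (n : ℝ) := by exact_mod_cast hn2
    have hmid : hh g 0 + 2 * π ∈ Set.Ioo (hh g 0) (hh g (2 * π)) := by
      constructor
      · linarith [Real.two_pi_pos]
      · rw [hre]; nlinarith [Real.two_pi_pos]
    obtain ⟨θ2, hθ2mem, hθ2⟩ := intermediate_value_Ioo (le_of_lt Real.two_pi_pos)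
      (continuous_hh g).continuousOn hmid
    have he2 : Complex.exp ((hh g θ2 : ℝ) * Complex.I)
        = Complex.exp ((hh g 0 : ℝ) * Complex.I) := by
      rw [hθ2]
      push_cast
      rw [add_mul, Complex.exp_add, Complex.exp_two_pi_mul_I, mul_one]
    have hz2 : zz g θ2 * (rr g 0 : ℂ) = zz g 0 * (rr g θ2 : ℂ) := by
      rw [polar g θ2, polar g 0, he2]; ring
    have h1 : (zz g θ2).re * rr g 0 = (zz g 0).re * rr g θ2 := by
      have := congrArg Complex.re hz2
      simpa [Complex.mul_re] using this
    have h2 : (zz g θ2).im * rr g 0 = (zz g 0).im * rr g θ2 := by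
      have := congrArg Complex.im hz2
      simpa [Complex.mul_im] using this
    simp only [zz_re, zz_im] at h1 h2
    simp only [Real.cos_zero, Real.sin_zero, mul_one, mul_zero, add_zero] at h1 h2
    have hr0 := rr_pos g 0
    have hr2 := rr_pos g θ2
    have hs0 : Real.sin θ2 * rr g 0 = 0 := by
      linear_combination g.1 0 0 * h2 - g.1 1 0 * h1 - (Real.sin θ2 * rr g 0) * hd
    have hs : Real.sin θ2 = 0 := by
      rcases mul_eq_zero.mp hs0 with h | h
      · exact h
      · exact absurd h hr0.ne'
    obtain ⟨m, hm⟩ := Real.sin_eq_zero_iff.mp hs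
    have hm1 : m = 1 := by
      rcases hθ2mem with ⟨hl, hr⟩
      have hπ := Real.pi_pos
      have h0m : 0 < (m : ℝ) := by
        by_contra hc
        push_neg at hc
        nlinarith
      have h2m : (m : ℝ) < 2 := by
        by_contra hc
        push_neg at hc
        nlinarith
      have : 0 < m := by exact_mod_cast h0m
      have : m < 2 := by exact_mod_cast h2m
      omega
    have hθπ : θ2 = π := by rw [← hm, hm1]; simp
    rw [hθπ] at h1 h2
    simp only [Real.cos_pi, Real.sin_pi, mul_zero, add_zero, mul_one, mul_neg, neg_mul] at h1 h2
    have hrπ := rr_pos g π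
    have hsumpos : 0 < rr g 0 + rr g π := by linarith
    have hA : g.1 0 0 = 0 := by
      have hsum : g.1 0 0 * (rr g 0 + rr g π) = 0 := by linear_combination -h1
      rcases mul_eq_zero.mp hsum with h | h
      · exact h
      · exact absurd h hsumpos.ne'
    have hC : g.1 1 0 = 0 := by
      have hsum : g.1 1 0 * (rr g 0 + rr g π) = 0 := by linear_combination -h2
      rcases mul_eq_zero.mp hsum with h | h
      · exact h
      · exact absurd h hsumpos.ne'
    rw [hA, hC] at hd
    norm_num at hd
  rw [hre, hn1]
  norm_num
lemma vnorm_eq (θ : ℝ) : vnorm (g.1.mulVec (circ θ)) = rr g θ := by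
  rw [vnorm, mulVec_circ_zero, mulVec_circ_one, rr_def, Complex.norm_def,
    Complex.normSq_apply]
  ring_nf

lemma normalized (θ : ℝ) :
    (vnorm (g.1.mulVec (circ θ)))⁻¹ • g.1.mulVec (circ θ) = circ (hh g θ) := by
  funext i
  have hr := (rr_pos g θ).ne'
  have h0 : circ (hh g θ) 0 = Real.cos (hh g θ) := rfl
  have h1 : circ (hh g θ) 1 = Real.sin (hh g θ) := rfl
  fin_cases i
  · show (vnorm (g.1.mulVec (circ θ)))⁻¹ • g.1.mulVec (circ θ) 0 = circ (hh g θ) 0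
    rw [smul_eq_mul, vnorm_eq, mulVec_circ_zero, a_eq, h0, inv_mul_cancel_left₀ hr]
  · show (vnorm (g.1.mulVec (circ θ)))⁻¹ • g.1.mulVec (circ θ) 1 = circ (hh g θ) 1
    rw [smul_eq_mul, vnorm_eq, mulVec_circ_one, b_eq, h1, inv_mul_cancel_left₀ hr]

lemma circ_periodic (φ : (Fin 2 → ℝ) → ℂ) :
    Function.Periodic (fun θ => φ (circ θ)) (2 * π) := by
  intro x
  have : circ (x + 2 * π) = circ x := by
    unfold circ
    rw [Real.cos_add_two_pi, Real.sin_add_two_pi]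
  show φ (circ (x + 2 * π)) = φ (circ x)
  rw [this]

end CAI

/-- For `g ∈ SL(2,ℝ)` and `φ` integrable on the unit circle `S` for arc length,
`∫_S φ(g·s/‖g·s‖) ‖g·s‖^{-2} ds = ∫_S φ(s) ds`. -/
theorem circle_action_invariance (g : Matrix.SpecialLinearGroup (Fin 2) ℝ)
    (φ : (Fin 2 → ℝ) → ℂ)
    (hφ : IntervalIntegrable (fun θ => φ (circ θ)) volume 0 (2 * π)) :
    (∫ θ in (0 : ℝ)..(2 * π),
        φ ((vnorm (g.1.mulVec (circ θ)))⁻¹ • g.1.mulVec (circ θ)) *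
          (((vnorm (g.1.mulVec (circ θ)) ^ 2)⁻¹ : ℝ) : ℂ))
      = ∫ θ in (0 : ℝ)..(2 * π), φ (circ θ) := by
  have h2π := Real.two_pi_pos
  -- Step 1: rewrite integrand
  have hstep1 : (∫ θ in (0 : ℝ)..(2 * π),
        φ ((vnorm (g.1.mulVec (circ θ)))⁻¹ • g.1.mulVec (circ θ)) *
          (((vnorm (g.1.mulVec (circ θ)) ^ 2)⁻¹ : ℝ) : ℂ))
      = ∫ θ in (0 : ℝ)..(2 * π), |CAI.rho g θ| • φ (circ (CAI.hh g θ)) := by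
    apply intervalIntegral.integral_congr
    intro θ _
    simp only
    rw [CAI.normalized, CAI.vnorm_eq, ← CAI.rho_def,
      abs_of_pos (CAI.rho_pos g θ), Complex.real_smul, mul_comm]
  rw [hstep1]
  -- Step 2: change of variables via the Jacobian formula
  have himage : CAI.hh g '' Set.Icc 0 (2 * π) = Set.Icc (CAI.hh g 0) (CAI.hh g (2 * π)) := by
    apply Set.Subset.antisymm
    · rintro y ⟨x, ⟨hx1, hx2⟩, rfl⟩
      exact ⟨(CAI.strictMono_hh g).monotone hx1, (CAI.strictMono_hh g).monotone hx2⟩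
    · exact intermediate_value_Icc h2π.le (CAI.continuous_hh g).continuousOn
  have hcv := MeasureTheory.integral_image_eq_integral_abs_deriv_smul
    (measurableSet_Icc : MeasurableSet (Set.Icc (0:ℝ) (2 * π)))
    (fun x _ => (CAI.hasDerivAt_hh g x).hasDerivWithinAt)
    ((CAI.strictMono_hh g).injective.injOn)
    (fun y => φ (circ y))
  rw [himage] at hcv
  have hmono0 : CAI.hh g 0 ≤ CAI.hh g (2 * π) := ((CAI.strictMono_hh g) h2π).le
  calc ∫ θ in (0 : ℝ)..(2 * π), |CAI.rho g θ| • φ (circ (CAI.hh g θ))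
      = ∫ θ in Set.Icc (0:ℝ) (2 * π), |CAI.rho g θ| • φ (circ (CAI.hh g θ)) := by
        rw [intervalIntegral.integral_of_le h2π.le, MeasureTheory.integral_Icc_eq_integral_Ioc]
    _ = ∫ y in Set.Icc (CAI.hh g 0) (CAI.hh g (2 * π)), φ (circ y) := hcv.symm
    _ = ∫ y in (CAI.hh g 0)..(CAI.hh g (2 * π)), φ (circ y) := by
        rw [intervalIntegral.integral_of_le hmono0, MeasureTheory.integral_Icc_eq_integral_Ioc]
    _ = ∫ y in (CAI.hh g 0)..(CAI.hh g 0 + 2 * π), φ (circ y) := by rw [CAI.hh_top]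
    _ = ∫ y in (0:ℝ)..(0 + 2 * π), φ (circ y) :=
        (CAI.circ_periodic φ).intervalIntegral_add_eq (CAI.hh g 0) 0
    _ = ∫ θ in (0 : ℝ)..(2 * π), φ (circ θ) := by rw [zero_add]
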